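/- arXiv:2601.04143 — 5 statements merged into one kernel-verified Lean document; each statement's English description precedes it below -/
import Mathlib

section
/- Let A be a commutative ring and s an element of A that is integral over a subring, satisfying an equation of the form s^N(1 - s·u) = 0 for some u in A and N ≥ 1. Then e = (s·u)^N is an idempotent of A, and the localization A[1/e] is isomorphic to A[1/s]. -/
theorem stmt_0 {A : Type*} [CommRing A] (s u : A) (N : ℕ) (hN : 1 ≤ N)
    (h : s ^ N * (1 - s * u) = 0) :
    IsIdempotentElem ((s * u) ^ N) ∧
      Nonempty (Localization.Away ((s * u) ^ N) ≃ₐ[A] Localization.Away s) := by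
  have key : ∀ k : ℕ, s ^ N * (s * u) ^ k = s ^ N := by
    intro k
    induction k with
    | zero => ring
    | succ k ih =>
      have : (s * u) ^ (k + 1) = (s * u) ^ k * (s * u) := pow_succ _ _
      linear_combination (-(s * u) ^ k) * h + ih
  have idem : IsIdempotentElem ((s * u) ^ N) := by
    show (s * u) ^ N * (s * u) ^ N = (s * u) ^ N
    linear_combination u ^ N * key N
  refine ⟨idem, ?_⟩
  set e := (s * u) ^ N with he
  set L := Localization.Away e
  have hunit : IsUnit (algebraMap A L e) :=
    IsLocalization.map_units L (⟨e, Submonoid.mem_powers e⟩ : Submonoid.powers e)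
  have he1 : algebraMap A L e = 1 := by
    have h2 : algebraMap A L e * algebraMap A L e = algebraMap A L e * 1 := by
      rw [mul_one, ← map_mul, idem]
    exact hunit.mul_left_cancel h2
  obtain ⟨M, rfl⟩ : ∃ M, N = M + 1 := ⟨N - 1, by omega⟩
  have hs : IsUnit (algebraMap A L s) := by
    refine IsUnit.of_mul_eq_one (algebraMap A L (u * (s * u) ^ M)) ?_
    rw [← map_mul]
    have : s * (u * (s * u) ^ M) = e := by rw [he]; ring
    rw [this, he1]
  have key' : ∀ n : ℕ, s ^ (M + 1) * e ^ n = s ^ (M + 1) := by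
    intro n
    rw [he, ← pow_mul]
    exact key _
  haveI : IsLocalization (Submonoid.powers s) L := by
    constructor
    constructor
    · rintro ⟨y, n, rfl⟩
      simpa using hs.pow n
    · intro z
      obtain ⟨⟨x, m⟩, hx⟩ := IsLocalization.surj (Submonoid.powers e) z
      obtain ⟨n, hn⟩ := m.2
      refine ⟨⟨x, 1⟩, ?_⟩
      simp only [Submonoid.coe_one, map_one, mul_one]
      rw [← hx]
      have : algebraMap A L (m : A) = 1 := by
        rw [← hn, map_pow, he1, one_pow]
      rw [this, mul_one]
    · intro x y hxy
      obtain ⟨c, hc⟩ := IsLocalization.exists_of_eq (M := Submonoid.powers e) hxy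
      obtain ⟨n, hn⟩ := c.2
      refine ⟨⟨s ^ (M + 1), ⟨M + 1, rfl⟩⟩, ?_⟩
      have hc' : e ^ n * x = e ^ n * y := by simp only at hn; rw [hn]; exact hc
      calc s ^ (M + 1) * x = s ^ (M + 1) * e ^ n * x := by rw [key']
        _ = s ^ (M + 1) * (e ^ n * x) := by ring
        _ = s ^ (M + 1) * (e ^ n * y) := by rw [hc']
        _ = s ^ (M + 1) * y := by rw [← mul_assoc, key']
  exact ⟨IsLocalization.algEquiv (Submonoid.powers s) L (Localization.Away s)⟩
end

section
/- Let A be a commutative ring that is finite (module-finite) over a field k, and let s ∈ A be such that A[1/s] is nontrivial. Then there exist u ∈ A and N ≥ 1 with s^N(1 - s·u) = 0; consequently e = (s·u)^N is an idempotent with A[1/e] ≅ A[1/s]. -/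
theorem stmt_1 {k A : Type*} [Field k] [CommRing A] [Algebra k A] [Module.Finite k A]
    (s : A) (hs : Nontrivial (Localization.Away s)) :
    ∃ (u : A) (N : ℕ), 1 ≤ N ∧ s ^ N * (1 - s * u) = 0 ∧
      IsIdempotentElem ((s * u) ^ N) ∧
      Nonempty (Localization.Away ((s * u) ^ N) ≃ₐ[A] Localization.Away s) := by
  have : IsArtinianRing A := IsArtinianRing.of_finite k A
  obtain ⟨n, u, hu⟩ := IsArtinian.exists_pow_succ_smul_dvd (s : A) (1 : A)
  simp only [smul_eq_mul, mul_one, Nat.succ_eq_add_one] at hu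
  -- hu : s ^ (n+1) * u = s ^ n
  set N := n + 1 with hN
  have key : s ^ N * (1 - s * u) = 0 := by
    have : s ^ (N + 1) * u = s ^ N := by
      calc s ^ (N + 1) * u = s * (s ^ (n + 1) * u) := by ring
        _ = s * s ^ n := by rw [hu]
        _ = s ^ N := by rw [hN]; ring
    calc s ^ N * (1 - s * u) = s ^ N - s ^ (N + 1) * u := by ring
      _ = 0 := by rw [this]; ring
  have habs : ∀ m : ℕ, s ^ N * (s * u) ^ m = s ^ N := by
    intro m
    induction m with
    | zero => simp
    | succ m ih =>
      calc s ^ N * (s * u) ^ (m + 1) = (s ^ (n + 1) * u) * s * (s * u) ^ m := by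
            rw [hN]; ring
        _ = s ^ n * s * (s * u) ^ m := by rw [hu]
        _ = s ^ N * (s * u) ^ m := by rw [hN]; ring
      rw [ih]
  have hpow : (s * u) ^ N = s ^ N * u ^ N := mul_pow s u N
  have hidem : IsIdempotentElem ((s * u) ^ N) := by
    unfold IsIdempotentElem
    calc (s * u) ^ N * (s * u) ^ N = (s ^ N * (s * u) ^ N) * u ^ N := by rw [hpow]; ring
      _ = s ^ N * u ^ N := by rw [habs]
      _ = (s * u) ^ N := hpow.symm
  refine ⟨u, N, Nat.le_add_left 1 n, key, hidem, ?_⟩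
  set e := (s * u) ^ N with he
  -- s is a unit in Localization.Away e
  have hsu_e : IsUnit (algebraMap A (Localization.Away e) s) := by
    have hdvd : s ∣ e := ⟨u * (s * u) ^ n, by rw [he, hN]; ring⟩
    exact isUnit_of_dvd_unit (map_dvd _ hdvd) (IsLocalization.Away.algebraMap_isUnit e)
  have hse_e : IsUnit (algebraMap A (Localization.Away e) e) :=
    IsLocalization.Away.algebraMap_isUnit e
  -- e is a unit in Localization.Away s
  have hs_s : IsUnit (algebraMap A (Localization.Away s) s) :=
    IsLocalization.Away.algebraMap_isUnit s
  have he_s : IsUnit (algebraMap A (Localization.Away s) e) := by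
    have h1 : algebraMap A (Localization.Away s) (s * u) = 1 := by
      have h0 : algebraMap A (Localization.Away s) (s ^ N * (1 - s * u)) = 0 := by
        rw [key, map_zero]
      rw [map_mul] at h0
      have hsN : IsUnit (algebraMap A (Localization.Away s) (s ^ N)) := by
        rw [map_pow]; exact hs_s.pow N
      have h2 : algebraMap A (Localization.Away s) (1 - s * u) = 0 := by
        rcases hsN with ⟨v, hv⟩
        have := congrArg (fun x => (↑v⁻¹ : Localization.Away s) * x) h0
        simpa [← hv, ← mul_assoc] using this
      rw [map_sub, map_one, sub_eq_zero] at h2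
      exact h2.symm
    rw [he, map_pow, h1, one_pow]
    exact isUnit_one
  -- both localizations are localizations at powers s ⊔ powers e
  set M : Submonoid A := Submonoid.powers s ⊔ Submonoid.powers e with hM
  have hunit_e : ∀ r ∈ M, IsUnit (algebraMap A (Localization.Away e) r) := by
    intro r hr
    have : M ≤ Submonoid.comap (algebraMap A (Localization.Away e)) (IsUnit.submonoid _) := by
      refine sup_le ?_ ?_ <;> rw [Submonoid.powers_le] <;>
        [exact hsu_e; exact hse_e]
    exact this hr
  have hunit_s : ∀ r ∈ M, IsUnit (algebraMap A (Localization.Away s) r) := by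
    intro r hr
    have : M ≤ Submonoid.comap (algebraMap A (Localization.Away s)) (IsUnit.submonoid _) := by
      refine sup_le ?_ ?_ <;> rw [Submonoid.powers_le] <;>
        [exact hs_s; exact he_s]
    exact this hr
  haveI l1 : IsLocalization M (Localization.Away e) :=
    IsLocalization.of_le (Submonoid.powers e) M le_sup_right hunit_e
  haveI l2 : IsLocalization M (Localization.Away s) :=
    IsLocalization.of_le (Submonoid.powers s) M le_sup_left hunit_s
  exact ⟨IsLocalization.algEquiv M (Localization.Away e) (Localization.Away s)⟩
end

section
/- Let R be a local ring with maximal ideal m, B a finite R-algebra generated as an R-module by b₁,…,b_m, y ∈ B, and e ∈ R[y] an element such that e·B ⊆ R[y] + m·B. Then there exists p ∈ R[y] with p ≡ e^m modulo terms involving m, such that p·B ⊆ R[y]; in particular B[1/p] ≅ R[y][1/p] as R-algebras. -/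
set_option maxHeartbeats 1000000 in
set_option synthInstance.maxHeartbeats 400000 in
theorem aux_loc {R B : Type*} [CommRing R] [CommRing B] [Algebra R B]
    (A : Subalgebra R B) (p : A) (hp : ∀ b : B, (p : B) * b ∈ A) :
    Nonempty (Localization.Away (p : B) ≃ₐ[R] Localization.Away p) := by
  haveI : IsScalarTower R A (Localization.Away p) := inferInstance
  haveI : IsLocalization (Submonoid.powers p) (Localization.Away (p : B)) := by
    have halg : ∀ a : A, algebraMap A (Localization.Away (p : B)) a
        = algebraMap B (Localization.Away (p : B)) (a : B) := fun a => rfl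
    constructor; constructor
    · rintro ⟨x, n, rfl⟩
      rw [halg]
      have : ((p ^ n : A) : B) ∈ Submonoid.powers (p : B) := ⟨n, by push_cast; ring⟩
      exact IsLocalization.map_units (M := Submonoid.powers (p : B)) _ ⟨_, this⟩
    · intro z
      obtain ⟨⟨b, t⟩, hbt⟩ := IsLocalization.surj (Submonoid.powers (p : B)) z
      dsimp only at hbt
      obtain ⟨n, hn⟩ := t.2
      have hn' : ((p : B)) ^ n = (t : B) := hn
      refine ⟨⟨⟨(p : B) * b, hp b⟩, ⟨p ^ (n + 1), n + 1, rfl⟩⟩, ?_⟩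
      have h1 : ((p ^ (n + 1) : A) : B) = (p : B) ^ (n + 1) := by push_cast; ring
      rw [halg, halg]
      calc z * algebraMap B (Localization.Away (p:B)) ((p ^ (n+1) : A) : B)
          = (z * algebraMap B (Localization.Away (p:B)) ((p:B) ^ n)) *
              algebraMap B (Localization.Away (p:B)) (p : B) := by
            rw [h1, pow_succ, map_mul, mul_assoc]
        _ = algebraMap B (Localization.Away (p:B)) b *
              algebraMap B (Localization.Away (p:B)) (p : B) := by rw [hn', hbt]
        _ = algebraMap B (Localization.Away (p:B)) (((⟨(p:B) * b, hp b⟩ : A) : B)) := by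
            rw [← map_mul, mul_comm]
    · intro a a' hh
      rw [halg, halg] at hh
      obtain ⟨c, hc⟩ := IsLocalization.exists_of_eq (M := Submonoid.powers (p : B)) hh
      obtain ⟨n, hn⟩ := c.2
      have hn' : ((p : B)) ^ n = (c : B) := hn
      refine ⟨⟨p ^ (n + 1), n + 1, rfl⟩, Subtype.ext ?_⟩
      push_cast
      rw [pow_succ, mul_comm ((p : B) ^ n), mul_assoc, mul_assoc, hn', hc]
  exact ⟨((IsLocalization.algEquiv (Submonoid.powers p) (Localization.Away p)
    (Localization.Away (p : B))).restrictScalars R).symm⟩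

set_option maxHeartbeats 1000000 in
theorem stmt_6 {R B : Type*} [CommRing R] [IsLocalRing R] [CommRing B] [Algebra R B]
    [Module.Finite R B] (y : B) (e : B) (he : e ∈ Algebra.adjoin R {y})
    (h : ∀ b : B, e * b ∈
      Subalgebra.toSubmodule (Algebra.adjoin R {y}) ⊔
        (IsLocalRing.maximalIdeal R) • (⊤ : Submodule R B)) :
    ∃ p : Algebra.adjoin R {y},
      (∃ n : ℕ, (p : B) - e ^ n ∈ (IsLocalRing.maximalIdeal R) • (⊤ : Submodule R B)) ∧
      (∀ b : B, (p : B) * b ∈ Algebra.adjoin R {y}) ∧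
      Nonempty (Localization.Away (p : B) ≃ₐ[R] Localization.Away p) := by
  classical
  set A := Algebra.adjoin R {y} with hA
  obtain ⟨s, hs⟩ := Module.Finite.fg_top (R := R) (M := B)
  set ι := {x : B // x ∈ s} with hι
  have hb : Submodule.span R (Set.range (Subtype.val : ι → B)) = ⊤ := by
    rw [Subtype.range_coe]; exact hs
  have key : ∀ j : ι, ∃ (qa : A) (μ : ι → R), (∀ l, μ l ∈ IsLocalRing.maximalIdeal R) ∧
      e * (j : B) = ↑qa + ∑ l : ι, μ l • (l : B) := by
    intro j
    obtain ⟨qv, hq, z, hz, hsum⟩ := Submodule.mem_sup.mp (h (j : B))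
    rw [← hb] at hz
    obtain ⟨a, ha, hsum2⟩ := (Submodule.mem_ideal_smul_span_iff_exists_sum _ _ _).mp hz
    refine ⟨⟨qv, hq⟩, a, fun l => ha l, ?_⟩
    rw [← hsum, ← hsum2, Finsupp.sum_fintype]
    intro l; simp
  choose q μ hμ heq using key
  -- the matrix over the subalgebra
  set M' : Matrix ι ι A := Matrix.of fun j l =>
    (if j = l then (⟨e, he⟩ : A) else 0) - algebraMap R A (μ j l) with hM'
  set M : Matrix ι ι B := Matrix.of fun j l =>
    (if j = l then e else 0) - algebraMap R B (μ j l) with hM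
  have hmap : (A.val.toRingHom).mapMatrix M' = M := by
    ext j l
    simp [hM', hM, apply_ite]
  set p : A := M'.det with hp
  have hpd : (p : B) = M.det := by
    rw [hp, show ((M'.det : B)) = A.val.toRingHom M'.det from rfl,
      RingHom.map_det, hmap]
  -- generators relation
  have hMv : M.mulVec (fun l : ι => (l : B)) = fun j => ((q j : B)) := by
    funext j
    have hj := heq j
    simp only [hM, Matrix.mulVec, dotProduct, Matrix.of_apply, sub_mul, ite_mul, one_mul,
      zero_mul, Finset.sum_sub_distrib, Finset.sum_ite_eq, Finset.mem_univ, if_true]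
    rw [Finset.sum_eq_single j (fun b _ hb => if_neg (Ne.symm hb)) (by simp), if_pos rfl]
    rw [hj]
    simp [Algebra.smul_def]
  have hgen : ∀ j : ι, M.det * (j : B) ∈ A := by
    intro j
    have h2 : (M.adjugate * M).mulVec (fun l : ι => (l : B)) j = M.det * (j : B) := by
      rw [Matrix.adjugate_mul, Matrix.smul_mulVec, Matrix.one_mulVec, Pi.smul_apply,
        smul_eq_mul]
    rw [← h2, ← Matrix.mulVec_mulVec, hMv]
    have hadj : ∀ j l, M.adjugate j l = ((M'.adjugate j l : A) : B) := by
      intro j l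
      rw [← hmap, ← RingHom.map_adjugate]
      rfl
    have : (M.adjugate.mulVec fun j => ((q j : B))) j
        = ((∑ l, M'.adjugate j l * q l : A) : B) := by
      simp only [Matrix.mulVec, dotProduct, hadj]
      push_cast
      rfl
    rw [this]
    exact Subtype.coe_prop _
  -- all of B
  have hallb : ∀ b : B, (p : B) * b ∈ A := by
    intro b
    have hb' : b ∈ Submodule.span R (Set.range (Subtype.val : ι → B)) := by
      rw [hb]; trivial
    induction hb' using Submodule.span_induction with
    | mem x hx =>
      obtain ⟨j, rfl⟩ := hx
      rw [hpd]; exact hgen j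
    | zero => simp only [mul_zero]; exact zero_mem A
    | add x y _ _ hx hy => rw [mul_add]; exact add_mem hx hy
    | smul r x _ hx => rw [mul_smul_comm]; exact Subalgebra.smul_mem A hx r
  -- congruence modulo m
  have hmod : (p : B) - e ^ (Fintype.card ι) ∈
      (IsLocalRing.maximalIdeal R) • (⊤ : Submodule R B) := by
    rw [Ideal.smul_top_eq_map, Submodule.restrictScalars_mem]
    set I := (IsLocalRing.maximalIdeal R).map (algebraMap R B) with hI
    rw [← Ideal.Quotient.eq]
    have hMq : (Ideal.Quotient.mk I).mapMatrix M
        = (Ideal.Quotient.mk I e) • (1 : Matrix ι ι (B ⧸ I)) := by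
      ext j l
      have hz : (algebraMap R (B ⧸ I)) (μ j l) = 0 := by
        rw [IsScalarTower.algebraMap_apply R B (B ⧸ I), Ideal.Quotient.algebraMap_eq,
          Ideal.Quotient.eq_zero_iff_mem]
        exact Ideal.mem_map_of_mem _ (hμ j l)
      by_cases hjl : j = l
      · subst hjl; simp [hM, Matrix.one_apply, hz]
      · simp [hM, hjl, Matrix.one_apply, hz]
    rw [hpd, RingHom.map_det, hMq, Matrix.det_smul, Matrix.det_one, mul_one, map_pow]
  exact ⟨p, ⟨Fintype.card ι, hmod⟩, hallb, aux_loc A p hallb⟩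
end

section
/- Let R be a local ring with maximal ideal m, B a finite R-algebra, and y ∈ B such that 1, y, …, y^{d-1} generate B/mB as an R/m-module. Then y satisfies a monic polynomial equation of degree d over R: there exists a monic Q ∈ R[X] of degree d with Q(y) = 0. -/
theorem stmt_8 {R B : Type*} [CommRing R] [IsLocalRing R] [CommRing B] [Algebra R B]
    [Module.Finite R B] (y : B) (d : ℕ) (hd : 1 ≤ d)
    (h : Submodule.span R (Set.range fun i : Fin d => y ^ (i : ℕ)) ⊔
        (IsLocalRing.maximalIdeal R) • ⊤ = ⊤) :
    ∃ Q : Polynomial R, Q.Monic ∧ Q.natDegree = d ∧ Polynomial.aeval y Q = 0 := by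
  have hspan : Submodule.span R (Set.range fun i : Fin d => y ^ (i : ℕ)) = ⊤ := by
    have := Submodule.sup_eq_sup_smul_of_le_smul_of_le_jacobson
      (N := Submodule.span R (Set.range fun i : Fin d => y ^ (i : ℕ)))
      (N' := (⊤ : Submodule R B)) (I := IsLocalRing.maximalIdeal R) (J := ⊥)
      Module.Finite.fg_top (IsLocalRing.maximalIdeal_le_jacobson ⊥) h.ge
    simpa [sup_comm] using this.symm.trans (by simp)
  have hy : y ^ d ∈ Submodule.span R (Set.range fun i : Fin d => y ^ (i : ℕ)) := by
    rw [hspan]; trivial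
  rw [Submodule.mem_span_range_iff_exists_fun R] at hy
  obtain ⟨c, hc⟩ := hy
  set p : Polynomial R := ∑ i : Fin d, Polynomial.C (c i) * Polynomial.X ^ (i : ℕ) with hp
  have hpdeg : p.degree < d := by
    refine lt_of_le_of_lt (Polynomial.degree_sum_le _ _) ?_
    rw [Finset.sup_lt_iff (by exact_mod_cast WithBot.bot_lt_coe d)]
    intro i _
    exact lt_of_le_of_lt (Polynomial.degree_C_mul_X_pow_le _ _)
      (by exact_mod_cast i.2)
  have hdeg : (Polynomial.X ^ d - p).degree = (d : WithBot ℕ) := by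
    have h1 : p.degree < (Polynomial.X ^ d : Polynomial R).degree := by
      rwa [Polynomial.degree_X_pow]
    rw [Polynomial.degree_sub_eq_left_of_degree_lt h1, Polynomial.degree_X_pow]
  refine ⟨Polynomial.X ^ d - p, Polynomial.monic_X_pow_sub hpdeg, ?_, ?_⟩
  · exact Polynomial.natDegree_eq_of_degree_eq_some hdeg
  · simp only [map_sub, map_pow, Polynomial.aeval_X, hp, map_sum, map_mul, Polynomial.aeval_C]
    rw [← hc]
    simp [Algebra.smul_def]
end

section
/- Let k be a field and A a finite k-algebra with an idempotent e such that A·e = k[x]·e for some x ∈ A (the subalgebra generated by x times e equals Ae), where x satisfies a polynomial P with nonzero constant coefficient and P(x)·e = 0. Then setting y = x·e, one has A·e = k[y]·e and moreover A·e ⊆ k[y], the k-subalgebra generated by y. -/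
open Polynomial

theorem stmt_11 {k A : Type*} [Field k] [CommRing A] [Algebra k A] [Module.Finite k A]
    (e : A) (he : IsIdempotentElem e) (x : A)
    (hgen : ∀ a : A, ∃ z ∈ Algebra.adjoin k {x}, a * e = z * e)
    (P : k[X]) (hP0 : P.coeff 0 ≠ 0) (hPx : Polynomial.aeval x P * e = 0) :
    (∀ a : A, ∃ z ∈ Algebra.adjoin k {x * e}, a * e = z * e) ∧
      (∀ a : A, a * e ∈ Algebra.adjoin k {x * e}) := by
  set y := x * e with hy
  have hee : e * e = e := he
  have hpow : ∀ n : ℕ, e ^ n * e = e := by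
    intro n; induction n with
    | zero => simp
    | succ n ih => rw [pow_succ, mul_assoc, hee, ih]
  have key : ∀ R : k[X], aeval x R * e = aeval y R * e := by
    intro R
    induction R using Polynomial.induction_on' with
    | add p q hp hq => simp only [map_add, add_mul, hp, hq]
    | monomial n c =>
      have hxe : x ^ n * e = (x * e) ^ n * e := by rw [mul_pow, mul_assoc, hpow]
      simp only [aeval_monomial, hy, mul_assoc]
      rw [hxe]
  -- membership of aeval y R in the adjoin
  have hmem : ∀ R : k[X], aeval y R ∈ Algebra.adjoin k ({y} : Set A) := by
    intro R
    rw [Algebra.adjoin_singleton_eq_range_aeval]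
    exact ⟨R, rfl⟩
  -- e lies in adjoin k {y}
  set c := P.coeff 0 with hc
  set w := aeval y (X * P.divX) with hw
  have hye : y * e = y := by rw [hy, mul_assoc, hee]
  have hwe : w * e = w := by
    rw [hw, map_mul, aeval_X, mul_comm y, mul_assoc, hye, mul_comm]
  have h0 : w + c • e = 0 := by
    have hsplit : X * P.divX + C c = P := Polynomial.X_mul_divX_add P
    have : aeval x (X * P.divX + C c) * e = 0 := by rw [hsplit]; exact hPx
    rw [map_add, add_mul, key, ← hw, hwe, aeval_C, Algebra.algebraMap_eq_smul_one,
      smul_mul_assoc, one_mul] at this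
    exact this
  have hemem : e ∈ Algebra.adjoin k ({y} : Set A) := by
    have h1 : c • e = -w := eq_neg_of_add_eq_zero_right h0
    have h2 : e = -(c⁻¹ • w) := by
      calc e = c⁻¹ • (c • e) := by rw [smul_smul, inv_mul_cancel₀ hP0, one_smul]
        _ = c⁻¹ • (-w) := by rw [h1]
        _ = -(c⁻¹ • w) := smul_neg _ _
    rw [h2]
    exact neg_mem (Subalgebra.smul_mem _ (hmem (X * P.divX)) _)
  have part1 : ∀ a : A, ∃ z ∈ Algebra.adjoin k ({y} : Set A), a * e = z * e := by
    intro a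
    obtain ⟨z, hz, hze⟩ := hgen a
    rw [Algebra.adjoin_singleton_eq_range_aeval] at hz
    obtain ⟨R, hR⟩ := hz
    exact ⟨aeval y R, hmem R, by rw [hze, ← hR]; exact key R⟩
  refine ⟨part1, fun a => ?_⟩
  obtain ⟨z, hz, hze⟩ := part1 a
  rw [hze]
  exact mul_mem hz hemem
end
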